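/- The Thomas–Fermi energy satisfies the scaling relation E_TF(N, Z) = Z^{7/3} E_TF(N/Z, 1) for all N, Z > 0, where E_TF(N,Z) is the infimum of the Thomas–Fermi functional ℰ_TF(ρ) = ∫ [(3/5)γ_TF ρ^{5/3} − (Z/|x|)ρ] dx + D(ρ,ρ) over nonnegative ρ ∈ L^{5/3}∩L¹ with ∫ρ ≤ N. -/

import Mathlib

open Real MeasureTheory ENNReal

noncomputable def gammaTF : ℝ := (3 * Real.pi ^ 2) ^ ((2 : ℝ) / 3) / 2

noncomputable def coulombD (f g : EuclideanSpace ℝ (Fin 3) → ℝ) : ℝ :=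
  (1 / 2) * ∫ x, ∫ y, f x * g y / ‖x - y‖

noncomputable def TFfunctional (Z : ℝ) (ρ : EuclideanSpace ℝ (Fin 3) → ℝ) : ℝ :=
  (∫ x, ((3 / 5) * gammaTF * ρ x ^ ((5 : ℝ) / 3) - Z / ‖x‖ * ρ x)) + coulombD ρ ρ

noncomputable def ETF (N Z : ℝ) : ℝ :=
  sInf {e : ℝ | ∃ ρ : EuclideanSpace ℝ (Fin 3) → ℝ,
    (∀ x, 0 ≤ ρ x) ∧ MemLp ρ ((5 : ℝ≥0∞) / 3) volume ∧ Integrable ρ ∧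
    (∫ x, ρ x) ≤ N ∧ e = TFfunctional Z ρ}

/-! Auxiliary material for the scaling proof. -/

open Pointwise

local notation "E3" => EuclideanSpace ℝ (Fin 3)

/-- The scaled density `x ↦ c² ρ(c^{1/3} x)`. -/
noncomputable def scaleRho (c : ℝ) (ρ : E3 → ℝ) : E3 → ℝ :=
  fun x => c ^ 2 * ρ ((c ^ ((1 : ℝ) / 3)) • x)

lemma cbrt_pos {c : ℝ} (hc : 0 < c) : 0 < c ^ ((1 : ℝ) / 3) :=
  Real.rpow_pos_of_pos hc _

lemma cbrt_cube {c : ℝ} (hc : 0 < c) : (c ^ ((1 : ℝ) / 3)) ^ (3 : ℕ) = c := by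
  rw [← Real.rpow_natCast (c ^ ((1 : ℝ) / 3)) 3, ← Real.rpow_mul hc.le]
  norm_num

lemma integral_comp_smul3 (f : E3 → ℝ) {c : ℝ} (hc : 0 < c) :
    (∫ x : E3, f ((c ^ ((1 : ℝ) / 3)) • x)) = c⁻¹ * ∫ x, f x := by
  rw [MeasureTheory.Measure.integral_comp_smul volume f (c ^ ((1 : ℝ) / 3))]
  rw [finrank_euclideanSpace_fin, cbrt_cube hc, smul_eq_mul,
    abs_of_nonneg (inv_nonneg.2 hc.le)]

lemma memLp_comp_smul3 {p : ℝ≥0∞} {f : E3 → ℝ} (hf : MemLp f p volume)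
    {R : ℝ} (hR : R ≠ 0) : MemLp (fun x => f (R • x)) p volume := by
  let t : E3 ≃ᵐ E3 := (Homeomorph.smul (isUnit_iff_ne_zero.2 hR).unit).toMeasurableEquiv
  refine (MeasurableEquiv.memLp_map_measure_iff t).mp
    (?_ : MemLp f p (Measure.map (R • ·) volume))
  rw [Measure.map_addHaar_smul volume hR]
  exact hf.smul_measure ENNReal.ofReal_ne_top

lemma integrable_comp_smul3 {f : E3 → ℝ} (hf : Integrable f) {R : ℝ} (hR : R ≠ 0) :
    Integrable (fun x => f (R • x)) := hf.comp_smul hR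

lemma scale_nonneg {c : ℝ} (hc : 0 < c) {ρ : E3 → ℝ} (h0 : ∀ x, 0 ≤ ρ x) :
    ∀ x, 0 ≤ scaleRho c ρ x := fun x => by
  have := h0 ((c ^ ((1 : ℝ) / 3)) • x); unfold scaleRho; positivity

lemma scale_memLp {c : ℝ} (hc : 0 < c) {ρ : E3 → ℝ} {p : ℝ≥0∞}
    (hLp : MemLp ρ p volume) : MemLp (scaleRho c ρ) p volume :=
  (memLp_comp_smul3 hLp (cbrt_pos hc).ne').const_mul _

lemma scale_integrable {c : ℝ} (hc : 0 < c) {ρ : E3 → ℝ}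
    (hInt : Integrable ρ) : Integrable (scaleRho c ρ) :=
  (integrable_comp_smul3 hInt (cbrt_pos hc).ne').const_mul _

lemma scale_integral {c : ℝ} (hc : 0 < c) (ρ : E3 → ℝ) :
    (∫ x, scaleRho c ρ x) = c * ∫ x, ρ x := by
  unfold scaleRho
  rw [MeasureTheory.integral_const_mul, integral_comp_smul3 ρ hc]
  rw [pow_two, mul_assoc, ← mul_assoc c c⁻¹, mul_inv_cancel₀ hc.ne', one_mul]

lemma coulomb_scale {c : ℝ} (hc : 0 < c) (ρ : E3 → ℝ) :
    coulombD (scaleRho c ρ) (scaleRho c ρ) = c ^ ((7 : ℝ) / 3) * coulombD ρ ρ := by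
  set r : ℝ := c ^ ((1 : ℝ) / 3) with hrdef
  have hr : 0 < r := cbrt_pos hc
  set F : E3 → E3 → ℝ := fun v u => ρ v * ρ u / ‖v - u‖ with hF
  set K : E3 → ℝ := fun v => ∫ u, F v u with hK
  have hin : ∀ x : E3, (∫ y, scaleRho c ρ x * scaleRho c ρ y / ‖x - y‖)
      = (c ^ 4 * r) * (c⁻¹ * K (r • x)) := by
    intro x
    have step1 : (∫ y, scaleRho c ρ x * scaleRho c ρ y / ‖x - y‖)
        = ∫ y, (c ^ 4 * r) * F (r • x) (r • y) := by
      refine integral_congr_ae (Filter.Eventually.of_forall fun y => ?_)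
      have hnorm : ‖x - y‖ = r⁻¹ * ‖r • x - r • y‖ := by
        rw [← smul_sub, norm_smul, Real.norm_eq_abs, abs_of_pos hr, ← mul_assoc,
          inv_mul_cancel₀ hr.ne', one_mul]
      simp only [scaleRho, hF, hnorm, div_eq_mul_inv, mul_inv, inv_inv]
      rw [hrdef]
      ring_nf
    rw [step1, MeasureTheory.integral_const_mul]
    congr 1
    exact integral_comp_smul3 (fun u => F (r • x) u) hc
  have outer : (∫ x, ∫ y, scaleRho c ρ x * scaleRho c ρ y / ‖x - y‖)
      = (c ^ 4 * r) * (c⁻¹ * (c⁻¹ * ∫ v, K v)) := by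
    rw [integral_congr_ae (Filter.Eventually.of_forall hin),
      MeasureTheory.integral_const_mul]
    congr 1
    rw [MeasureTheory.integral_const_mul]
    congr 1
    exact integral_comp_smul3 K hc
  have hpow : c ^ 4 * r * c⁻¹ * c⁻¹ = c ^ ((7 : ℝ) / 3) := by
    rw [hrdef, ← Real.rpow_natCast c 4, ← Real.rpow_neg_one c, ← Real.rpow_add hc,
      ← Real.rpow_add hc, ← Real.rpow_add hc]
    norm_num
  unfold coulombD
  rw [outer]
  rw [show (1 : ℝ) / 2 * ((c ^ 4 * r) * (c⁻¹ * (c⁻¹ * ∫ v, K v)))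
      = (c ^ 4 * r * c⁻¹ * c⁻¹) * (1 / 2 * ∫ v, K v) by ring, hpow]

lemma TF_scale {c : ℝ} (hc : 0 < c) (W : ℝ) (ρ : E3 → ℝ) (h0 : ∀ x, 0 ≤ ρ x) :
    TFfunctional (c * W) (scaleRho c ρ) = c ^ ((7 : ℝ) / 3) * TFfunctional W ρ := by
  set r : ℝ := c ^ ((1 : ℝ) / 3) with hrdef
  have hr : 0 < r := cbrt_pos hc
  set g : E3 → ℝ := fun y => 3 / 5 * gammaTF * ρ y ^ ((5 : ℝ) / 3) - W / ‖y‖ * ρ y with hg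
  have main : (∫ x, (3 / 5 * gammaTF * (scaleRho c ρ x) ^ ((5 : ℝ) / 3)
        - (c * W) / ‖x‖ * scaleRho c ρ x))
      = c ^ ((10 : ℝ) / 3) * (c⁻¹ * ∫ x, g x) := by
    have step1 : (∫ x, (3 / 5 * gammaTF * (scaleRho c ρ x) ^ ((5 : ℝ) / 3)
          - (c * W) / ‖x‖ * scaleRho c ρ x))
        = ∫ x, c ^ ((10 : ℝ) / 3) * g (r • x) := by
      refine integral_congr_ae (Filter.Eventually.of_forall fun x => ?_)
      have ht := h0 (r • x)
      have hmul : (c ^ 2 * ρ (r • x)) ^ ((5 : ℝ) / 3)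
          = c ^ ((10 : ℝ) / 3) * ρ (r • x) ^ ((5 : ℝ) / 3) := by
        rw [Real.mul_rpow (by positivity) ht, ← Real.rpow_natCast c 2,
          ← Real.rpow_mul hc.le]
        norm_num
      have hnorm : ‖r • x‖ = r * ‖x‖ := by
        rw [norm_smul, Real.norm_eq_abs, abs_of_pos hr]
      have hc10 : c ^ ((10 : ℝ) / 3) = c ^ 2 * c * r := by
        have h3 : c ^ 2 * c * r = c ^ (3 : ℕ) * r := by ring
        rw [h3, hrdef, ← Real.rpow_natCast c 3, ← Real.rpow_add hc]
        norm_num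
      simp only [scaleRho, ← hrdef, hg, hmul, hnorm]
      rw [hc10]
      have hx := norm_nonneg (x : E3)
      rcases eq_or_lt_of_le hx with hx0 | hx0
      · rw [← hx0]
        simp only [div_zero, mul_zero, zero_mul, sub_zero]
        ring
      · linear_combination (c ^ 2 * c * W * ρ (r • x) / ‖x‖) * mul_inv_cancel₀ hr.ne'
    rw [step1, MeasureTheory.integral_const_mul]
    congr 1
    exact integral_comp_smul3 g hc
  have hpow : c ^ ((10 : ℝ) / 3) * c⁻¹ = c ^ ((7 : ℝ) / 3) := by
    rw [← Real.rpow_neg_one c, ← Real.rpow_add hc]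
    norm_num
  unfold TFfunctional
  rw [main, coulomb_scale hc ρ]
  rw [show c ^ ((10 : ℝ) / 3) * (c⁻¹ * ∫ x, g x) = (c ^ ((10 : ℝ) / 3) * c⁻¹) * ∫ x, g x by ring,
    hpow, hg]
  ring

set_option linter.unusedVariables false in
theorem thomasFermi_scaling (N Z : ℝ) (hN : 0 < N) (hZ : 0 < Z) :
    ETF N Z = Z ^ ((7 : ℝ) / 3) * ETF (N / Z) 1 := by
  have hZ73 : (0 : ℝ) < Z ^ ((7 : ℝ) / 3) := Real.rpow_pos_of_pos hZ _
  have hset : {e : ℝ | ∃ ρ : E3 → ℝ,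
      (∀ x, 0 ≤ ρ x) ∧ MemLp ρ ((5 : ℝ≥0∞) / 3) volume ∧ Integrable ρ ∧
      (∫ x, ρ x) ≤ N ∧ e = TFfunctional Z ρ}
      = Z ^ ((7 : ℝ) / 3) • {e : ℝ | ∃ ρ : E3 → ℝ,
      (∀ x, 0 ≤ ρ x) ∧ MemLp ρ ((5 : ℝ≥0∞) / 3) volume ∧ Integrable ρ ∧
      (∫ x, ρ x) ≤ N / Z ∧ e = TFfunctional 1 ρ} := by
    ext e
    constructor
    · rintro ⟨ρ, h0, hLp, hInt, hle, rfl⟩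
      have hci : (0 : ℝ) < Z⁻¹ := inv_pos.2 hZ
      refine Set.mem_smul_set.2 ⟨TFfunctional 1 (scaleRho Z⁻¹ ρ),
        ⟨scaleRho Z⁻¹ ρ, scale_nonneg hci h0, scale_memLp hci hLp,
          scale_integrable hci hInt, ?_, rfl⟩, ?_⟩
      · rw [scale_integral hci ρ, div_eq_inv_mul]
        exact mul_le_mul_of_nonneg_left hle hci.le
      · have h1 : TFfunctional 1 (scaleRho Z⁻¹ ρ)
            = (Z⁻¹) ^ ((7 : ℝ) / 3) * TFfunctional Z ρ := by
          have := TF_scale hci Z ρ h0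
          rwa [inv_mul_cancel₀ hZ.ne'] at this
        rw [h1, smul_eq_mul, ← mul_assoc, Real.inv_rpow hZ.le,
          mul_inv_cancel₀ hZ73.ne', one_mul]
    · intro he
      obtain ⟨e', ⟨ρ, h0, hLp, hInt, hle, rfl⟩, hee⟩ := Set.mem_smul_set.1 he
      refine ⟨scaleRho Z ρ, scale_nonneg hZ h0, scale_memLp hZ hLp,
        scale_integrable hZ hInt, ?_, ?_⟩
      · rw [scale_integral hZ ρ]
        calc Z * ∫ x, ρ x ≤ Z * (N / Z) := mul_le_mul_of_nonneg_left hle hZ.le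
          _ = N := by rw [mul_comm, div_mul_cancel₀ N hZ.ne']
      · have := TF_scale hZ 1 ρ h0
        rw [mul_one] at this
        rw [← hee, smul_eq_mul, this]
  unfold ETF
  rw [hset, Real.sInf_smul_of_nonneg hZ73.le, smul_eq_mul]
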